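/- arXiv:0804.0674 — 3 statements merged into one kernel-verified Lean document; each statement's English description precedes it below -/
import Mathlib

section
/- If p ∈ U satisfies F³(p) ≠ 0, then the two vectors (F²(p), −F¹(p)) and (Ψ²(p), −Ψ¹(p)) of ℝ² are linearly independent (so the invariant vector fields ξ₁ and ξ₂ built from them are linearly independent at every point of the generic orbit). -/
noncomputable section

/-- Partial derivative with respect to the first variable `x`. -/
def px (f : ℝ × ℝ → ℝ) (p : ℝ × ℝ) : ℝ := fderiv ℝ f p (1, 0)

/-- Partial derivative with respect to the second variable `y`. -/
def py (f : ℝ × ℝ → ℝ) (p : ℝ × ℝ) : ℝ := fderiv ℝ f p (0, 1)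

/-- F¹ = 3a⁰_yy − 2a¹_xy + a²_xx + 3a³a⁰_x − 3a²a⁰_y + 2a¹a¹_y − a¹a²_x − 3a⁰a²_y + 6a⁰a³_x -/
def F1 (a0 a1 a2 a3 : ℝ × ℝ → ℝ) (p : ℝ × ℝ) : ℝ :=
  3 * py (py a0) p - 2 * py (px a1) p + px (px a2) p
    + 3 * a3 p * px a0 p - 3 * a2 p * py a0 p + 2 * a1 p * py a1 p
    - a1 p * px a2 p - 3 * a0 p * py a2 p + 6 * a0 p * px a3 p

/-- F² = a¹_yy − 2a²_xy + 3a³_xx − 3a⁰a³_y + 3a¹a³_x − 2a²a²_x + a²a¹_y + 3a³a¹_x − 6a³a⁰_y -/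
def F2 (a0 a1 a2 a3 : ℝ × ℝ → ℝ) (p : ℝ × ℝ) : ℝ :=
  py (py a1) p - 2 * py (px a2) p + 3 * px (px a3) p
    - 3 * a0 p * py a3 p + 3 * a1 p * px a3 p - 2 * a2 p * px a2 p
    + a2 p * py a1 p + 3 * a3 p * px a1 p - 6 * a3 p * py a0 p

/-- F³ = F²(F¹F²_x − F²F¹_x) − F¹(F¹F²_y − F²F¹_y)
        + (F¹)³a³ − (F¹)²F²a² + F¹(F²)²a¹ − (F²)³a⁰ -/
def F3 (a0 a1 a2 a3 : ℝ × ℝ → ℝ) (p : ℝ × ℝ) : ℝ :=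
  F2 a0 a1 a2 a3 p * (F1 a0 a1 a2 a3 p * px (F2 a0 a1 a2 a3) p
      - F2 a0 a1 a2 a3 p * px (F1 a0 a1 a2 a3) p)
    - F1 a0 a1 a2 a3 p * (F1 a0 a1 a2 a3 p * py (F2 a0 a1 a2 a3) p
      - F2 a0 a1 a2 a3 p * py (F1 a0 a1 a2 a3) p)
    + (F1 a0 a1 a2 a3 p) ^ 3 * a3 p
    - (F1 a0 a1 a2 a3 p) ^ 2 * F2 a0 a1 a2 a3 p * a2 p
    + F1 a0 a1 a2 a3 p * (F2 a0 a1 a2 a3 p) ^ 2 * a1 p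
    - (F2 a0 a1 a2 a3 p) ^ 3 * a0 p

/-- Ψ¹ = −(F¹)²a² + 2F¹F²a¹ − 3(F²)²a⁰ − F¹F¹_y + 4F¹F²_x − 3F¹_xF² -/
def Psi1 (a0 a1 a2 a3 : ℝ × ℝ → ℝ) (p : ℝ × ℝ) : ℝ :=
  -(F1 a0 a1 a2 a3 p) ^ 2 * a2 p + 2 * F1 a0 a1 a2 a3 p * F2 a0 a1 a2 a3 p * a1 p
    - 3 * (F2 a0 a1 a2 a3 p) ^ 2 * a0 p
    - F1 a0 a1 a2 a3 p * py (F1 a0 a1 a2 a3) p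
    + 4 * F1 a0 a1 a2 a3 p * px (F2 a0 a1 a2 a3) p
    - 3 * px (F1 a0 a1 a2 a3) p * F2 a0 a1 a2 a3 p

/-- Ψ² = −3(F¹)²a³ + 2F¹F²a² − (F²)²a¹ + 3F¹F²_y − 4F¹_yF² + F²F²_x -/
def Psi2 (a0 a1 a2 a3 : ℝ × ℝ → ℝ) (p : ℝ × ℝ) : ℝ :=
  -3 * (F1 a0 a1 a2 a3 p) ^ 2 * a3 p + 2 * F1 a0 a1 a2 a3 p * F2 a0 a1 a2 a3 p * a2 p
    - (F2 a0 a1 a2 a3 p) ^ 2 * a1 p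
    + 3 * F1 a0 a1 a2 a3 p * py (F2 a0 a1 a2 a3) p
    - 4 * py (F1 a0 a1 a2 a3) p * F2 a0 a1 a2 a3 p
    + F2 a0 a1 a2 a3 p * px (F2 a0 a1 a2 a3) p

lemma linearIndependent_pair_prod_of_det_ne_zero {R : Type*} [CommRing R] [NoZeroDivisors R]
    {a b c d : R} (hdet : a * d - b * c ≠ 0) : LinearIndependent R ![(a, b), (c, d)] := by
  rw [LinearIndependent.pair_iff]
  intro s t hst
  have hfst : s * a + t * c = 0 := congrArg Prod.fst hst
  have hsnd : s * b + t * d = 0 := congrArg Prod.snd hst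
  have hs : s * (a * d - b * c) = 0 := by linear_combination d * hfst - c * hsnd
  have ht : t * (a * d - b * c) = 0 := by linear_combination a * hsnd - b * hfst
  exact ⟨(mul_eq_zero.mp hs).resolve_right hdet, (mul_eq_zero.mp ht).resolve_right hdet⟩

lemma F2_mul_neg_Psi1_sub_neg_F1_mul_Psi2 (a0 a1 a2 a3 : ℝ × ℝ → ℝ) (p : ℝ × ℝ) :
    F2 a0 a1 a2 a3 p * -Psi1 a0 a1 a2 a3 p - -F1 a0 a1 a2 a3 p * Psi2 a0 a1 a2 a3 p
      = -3 * F3 a0 a1 a2 a3 p := by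
  simp only [F3, Psi1, Psi2]
  ring

theorem stmt2_general (a0 a1 a2 a3 : ℝ × ℝ → ℝ)
    (p : ℝ × ℝ) (hF3 : F3 a0 a1 a2 a3 p ≠ 0) :
    LinearIndependent ℝ
      ![((F2 a0 a1 a2 a3 p, -F1 a0 a1 a2 a3 p) : ℝ × ℝ),
        ((Psi2 a0 a1 a2 a3 p, -Psi1 a0 a1 a2 a3 p) : ℝ × ℝ)] := by
  apply linearIndependent_pair_prod_of_det_ne_zero
  rw [F2_mul_neg_Psi1_sub_neg_F1_mul_Psi2]
  exact mul_ne_zero (by norm_num) hF3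

/-- If F³(p) ≠ 0 then (F²(p), −F¹(p)) and (Ψ²(p), −Ψ¹(p)) are linearly independent in ℝ². -/
theorem stmt2 (U : Set (ℝ × ℝ)) (hU : IsOpen U) (a0 a1 a2 a3 : ℝ × ℝ → ℝ)
    (ha0 : ContDiffOn ℝ (⊤ : ℕ∞) a0 U) (ha1 : ContDiffOn ℝ (⊤ : ℕ∞) a1 U)
    (ha2 : ContDiffOn ℝ (⊤ : ℕ∞) a2 U) (ha3 : ContDiffOn ℝ (⊤ : ℕ∞) a3 U)
    (p : ℝ × ℝ) (hp : p ∈ U) (hF3 : F3 a0 a1 a2 a3 p ≠ 0) :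
    LinearIndependent ℝ
      ![((F2 a0 a1 a2 a3 p, -F1 a0 a1 a2 a3 p) : ℝ × ℝ),
        ((Psi2 a0 a1 a2 a3 p, -Psi1 a0 a1 a2 a3 p) : ℝ × ℝ)] :=
  stmt2_general a0 a1 a2 a3 p hF3

end
end

section
/- Let h^i_{j,k} (i, j, k ∈ {1,2}) be real numbers with h^i_{j,k} = h^i_{k,j}. Define reals h^i_{j₁j₂,k} (symmetric in j₁, j₂) by: h²_{12,2} = h²_{1,2}h¹_{1,2} − h²_{1,1}h¹_{2,2}; h¹_{12,2} = h¹_{2,2}h¹_{1,1} + h²_{2,2}h¹_{1,2} − (h¹_{1,2})² − h²_{1,2}h¹_{2,2}; h²_{12,1} = −h¹_{1,2}h²_{1,1} − (h²_{1,2})² + h¹_{1,1}h²_{1,2} + h²_{1,1}h²_{2,2}; h¹_{12,1} = h²_{1,2}h¹_{1,2} − h²_{1,1}h¹_{2,2}; and for each k ∈ {1,2}: h¹_{11,k} = 2h²_{12,k}, h²_{22,k} = 2h¹_{12,k}, h¹_{22,k} = 0, h²_{11,k} = 0. Then for each i ∈ {1,2}: Σ_k ( h^k_{12,1}h^i_{k,2}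 − h^k_{12,2}h^i_{k,1} + h^k_{1,1}h^i_{k2,2} − h^k_{1,2}h^i_{k2,1} + h^k_{2,1}h^i_{k1,2} − h^k_{2,2}h^i_{k1,1} ) = 0. (This computation shows that the 2-form ω_H is independent of the choice of normalized horizontal subspace H ⊂ A_{θ₂}, i.e., ω_{H̃} − ω_H = 0.) -/
theorem stmt13 (h : Fin 2 → Fin 2 → Fin 2 → ℝ)
    (hsym : ∀ i j k, h i j k = h i k j)
    (h2 : Fin 2 → Fin 2 → Fin 2 → Fin 2 → ℝ)
    (h2sym : ∀ i j k r, h2 i j k r = h2 i k j r)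
    -- h²_{12,2} = h²_{1,2}h¹_{1,2} − h²_{1,1}h¹_{2,2}
    (e1 : h2 1 0 1 1 = h 1 0 1 * h 0 0 1 - h 1 0 0 * h 0 1 1)
    -- h¹_{12,2} = h¹_{2,2}h¹_{1,1} + h²_{2,2}h¹_{1,2} − (h¹_{1,2})² − h²_{1,2}h¹_{2,2}
    (e2 : h2 0 0 1 1 = h 0 1 1 * h 0 0 0 + h 1 1 1 * h 0 0 1
      - h 0 0 1 * h 0 0 1 - h 1 0 1 * h 0 1 1)
    -- h²_{12,1} = −h¹_{1,2}h²_{1,1} − (h²_{1,2})² + h¹_{1,1}h²_{1,2} + h²_{1,1}h²_{2,2}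
    (e3 : h2 1 0 1 0 = -(h 0 0 1 * h 1 0 0) - h 1 0 1 * h 1 0 1
      + h 0 0 0 * h 1 0 1 + h 1 0 0 * h 1 1 1)
    -- h¹_{12,1} = h²_{1,2}h¹_{1,2} − h²_{1,1}h¹_{2,2}
    (e4 : h2 0 0 1 0 = h 1 0 1 * h 0 0 1 - h 1 0 0 * h 0 1 1)
    -- h¹_{11,k} = 2h²_{12,k}, h²_{22,k} = 2h¹_{12,k}, h¹_{22,k} = 0, h²_{11,k} = 0
    (e5 : ∀ k, h2 0 0 0 k = 2 * h2 1 0 1 k)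
    (e6 : ∀ k, h2 1 1 1 k = 2 * h2 0 0 1 k)
    (e7 : ∀ k, h2 0 1 1 k = 0)
    (e8 : ∀ k, h2 1 0 0 k = 0) :
    -- Σ_k ( h^k_{12,1}h^i_{k,2} − h^k_{12,2}h^i_{k,1} + h^k_{1,1}h^i_{k2,2}
    --     − h^k_{1,2}h^i_{k2,1} + h^k_{2,1}h^i_{k1,2} − h^k_{2,2}h^i_{k1,1} ) = 0
    ∀ i, ∑ k, (h2 k 0 1 0 * h i k 1 - h2 k 0 1 1 * h i k 0
      + h k 0 0 * h2 i k 1 1 - h k 0 1 * h2 i k 1 0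
      + h k 1 0 * h2 i k 0 1 - h k 1 1 * h2 i k 0 0) = 0 := by
  -- Orienting each symmetric index pair as `0 1` lets e1–e8 eliminate every second-order
  -- component, leaving a polynomial identity in the first-order ones.
  have h_swap : ∀ a, h a 1 0 = h a 0 1 := fun a => hsym a 1 0
  have h2_swap : ∀ a k, h2 a 1 0 k = h2 a 0 1 k := fun a k => h2sym a 1 0 k
  refine Fin.forall_fin_two.2 ⟨?_, ?_⟩ <;>
    simp only [Fin.sum_univ_two, h_swap, h2_swap, e1, e2, e3, e4, e5, e6, e7, e8] <;> ring
end

section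
/- Let F¹ ≠ 0 and F², A₁, A₂, B₁, B₂ be real numbers. Consider the system in unknowns h^i_{j,k} (i, j, k ∈ {1,2}) subject to the symmetry h^i_{j,k} = h^i_{k,j}: 2F¹h¹_{1,1} + F²h²_{1,1} + F¹h²_{1,2} = −A₁; 2F¹h¹_{1,2} + F²h²_{1,2} + F¹h²_{2,2} = −A₂; F²h¹_{1,1} + F¹h¹_{1,2} + 2F²h²_{1,2} = −B₁; F²h¹_{1,2} + F¹h¹_{2,2} + 2F²h²_{2,2} = −B₂. Then for every prescribed pair (h¹_{1,1}, h²_{1,1}) ∈ ℝ² there is exactly one symmetric solution of the system attaining those two values; in particular the solution set is a nonempty 2-dimensional affine subspace. (This is the computation of the first-order components of the horizontal subspaces of A_{θ₃} satisfying the normalization condition, in the case F¹ ≠ 0.) -/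
/-!
Once h¹₁₁ and h²₁₁ are prescribed, the four equations, taken in the order 1, 3, 2, 4, form a
triangular system in h²₁₂, h¹₁₂, h²₂₂, h¹₂₂ whose diagonal entries all equal F¹. Since F¹ ≠ 0,
forward substitution solves it, and the homogeneous system has only the trivial solution.
-/

theorem fin_two_symm_eq {α : Type*} {g : Fin 2 → Fin 2 → α} (hg : ∀ j k, g j k = g k j) :
    g = ![![g 0 0, g 0 1], ![g 0 1, g 1 1]] := by
  ext j k
  fin_cases j <;> fin_cases k <;> simp [hg 1 0]

section

variable (F1 F2 A1 A2 B1 B2 : ℝ)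

/-- `h i j k` stands for h^{i+1}_{j+1,k+1}. -/
def IsNormalizationSolution (h : Fin 2 → Fin 2 → Fin 2 → ℝ) : Prop :=
  (∀ i j k, h i j k = h i k j) ∧
    2 * F1 * h 0 0 0 + F2 * h 1 0 0 + F1 * h 1 0 1 = -A1 ∧
    2 * F1 * h 0 0 1 + F2 * h 1 0 1 + F1 * h 1 1 1 = -A2 ∧
    F2 * h 0 0 0 + F1 * h 0 0 1 + 2 * F2 * h 1 0 1 = -B1 ∧
    F2 * h 0 0 1 + F1 * h 0 1 1 + 2 * F2 * h 1 1 1 = -B2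

noncomputable def normalizationSolution (a b : ℝ) : Fin 2 → Fin 2 → Fin 2 → ℝ :=
  let p := (-A1 - 2 * F1 * a - F2 * b) / F1
  let q := (-B1 - F2 * a - 2 * F2 * p) / F1
  let r := (-A2 - 2 * F1 * q - F2 * p) / F1
  let s := (-B2 - F2 * q - 2 * F2 * r) / F1
  ![![![a, q], ![q, s]], ![![b, p], ![p, r]]]

variable {F1 F2 A1 A2 B1 B2}

theorem isNormalizationSolution_normalizationSolution (hF1 : F1 ≠ 0) (a b : ℝ) :
    IsNormalizationSolution F1 F2 A1 A2 B1 B2 (normalizationSolution F1 F2 A1 A2 B1 B2 a b) := by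
  refine ⟨?_, ?_, ?_, ?_, ?_⟩
  · intro i j k
    fin_cases i <;> fin_cases j <;> fin_cases k <;> rfl
  all_goals
    simp only [normalizationSolution, Matrix.cons_val_zero, Matrix.cons_val_one]
    field_simp
    ring

theorem IsNormalizationSolution.eq (hF1 : F1 ≠ 0) {h h' : Fin 2 → Fin 2 → Fin 2 → ℝ}
    (hh : IsNormalizationSolution F1 F2 A1 A2 B1 B2 h)
    (hh' : IsNormalizationSolution F1 F2 A1 A2 B1 B2 h')
    (ha : h 0 0 0 = h' 0 0 0) (hb : h 1 0 0 = h' 1 0 0) : h = h' := by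
  obtain ⟨hsym, e1, e2, e3, e4⟩ := hh
  obtain ⟨hsym', e1', e2', e3', e4'⟩ := hh'
  have hp : h 1 0 1 = h' 1 0 1 :=
    mul_left_cancel₀ hF1 (by linear_combination e1 - e1' - 2 * F1 * ha - F2 * hb)
  have hq : h 0 0 1 = h' 0 0 1 :=
    mul_left_cancel₀ hF1 (by linear_combination e3 - e3' - F2 * ha - 2 * F2 * hp)
  have hr : h 1 1 1 = h' 1 1 1 :=
    mul_left_cancel₀ hF1 (by linear_combination e2 - e2' - 2 * F1 * hq - F2 * hp)
  have hs : h 0 1 1 = h' 0 1 1 :=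
    mul_left_cancel₀ hF1 (by linear_combination e4 - e4' - F2 * hq - 2 * F2 * hr)
  refine funext (Fin.forall_fin_two.2 ⟨?_, ?_⟩)
  · rw [fin_two_symm_eq (hsym 0), fin_two_symm_eq (hsym' 0), ha, hq, hs]
  · rw [fin_two_symm_eq (hsym 1), fin_two_symm_eq (hsym' 1), hb, hp, hr]

end

theorem stmt14 (F1 F2 A1 A2 B1 B2 : ℝ) (hF1 : F1 ≠ 0) :
    ∀ a b : ℝ, ∃! h : Fin 2 → Fin 2 → Fin 2 → ℝ,
      (∀ i j k, h i j k = h i k j) ∧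
      2 * F1 * h 0 0 0 + F2 * h 1 0 0 + F1 * h 1 0 1 = -A1 ∧
      2 * F1 * h 0 0 1 + F2 * h 1 0 1 + F1 * h 1 1 1 = -A2 ∧
      F2 * h 0 0 0 + F1 * h 0 0 1 + 2 * F2 * h 1 0 1 = -B1 ∧
      F2 * h 0 0 1 + F1 * h 0 1 1 + 2 * F2 * h 1 1 1 = -B2 ∧
      h 0 0 0 = a ∧ h 1 0 0 = b := by
  intro a b
  obtain ⟨hsym, e1, e2, e3, e4⟩ := isNormalizationSolution_normalizationSolution
    (F2 := F2) (A1 := A1) (A2 := A2) (B1 := B1) (B2 := B2) hF1 a b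
  refine ⟨normalizationSolution F1 F2 A1 A2 B1 B2 a b, ⟨hsym, e1, e2, e3, e4, rfl, rfl⟩, ?_⟩
  rintro h ⟨hsym', e1', e2', e3', e4', rfl, rfl⟩
  exact IsNormalizationSolution.eq hF1 ⟨hsym', e1', e2', e3', e4'⟩ ⟨hsym, e1, e2, e3, e4⟩ rfl rfl
end
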